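/- If P and K are two distinct graded weakly prime ideals of a G-graded ring R, then P ∩ K is a graded weakly 2-absorbing ideal of R. -/

import Mathlib

variable {G R : Type*} [AddGroup G] [DecidableEq G] [Ring R]

/-- `x` is a homogeneous element of the `G`-graded ring `R`. -/
def IsHomog (𝒜 : G → AddSubgroup R) (x : R) : Prop := ∃ g, x ∈ 𝒜 g

/-- A two-sided ideal is graded if it contains all homogeneous components of its elements. -/
def IsGradedIdeal (𝒜 : G → AddSubgroup R) [GradedRing 𝒜] (P : TwoSidedIdeal R) : Prop :=
  ∀ a ∈ P, ∀ g : G, (DirectSum.decompose 𝒜 a g : R) ∈ P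

/-- Graded weakly prime: a proper graded ideal `P` such that `0 ≠ IJ ⊆ P` for graded
ideals `I, J` implies `I ⊆ P` or `J ⊆ P`. -/
def IsGradedWeaklyPrime (𝒜 : G → AddSubgroup R) [GradedRing 𝒜] (P : TwoSidedIdeal R) : Prop :=
  P ≠ ⊤ ∧ IsGradedIdeal 𝒜 P ∧
    ∀ I J : TwoSidedIdeal R, IsGradedIdeal 𝒜 I → IsGradedIdeal 𝒜 J →
      (∃ a ∈ I, ∃ b ∈ J, a * b ≠ 0) → (∀ a ∈ I, ∀ b ∈ J, a * b ∈ P) →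
      I ≤ P ∨ J ≤ P

/-- Graded weakly 2-absorbing: a proper graded ideal `P` such that for homogeneous `x, y, z`,
`0 ≠ xRyRz ⊆ P` implies `xy ∈ P` or `yz ∈ P` or `xz ∈ P`. -/
def IsGradedWeakly2Absorbing (𝒜 : G → AddSubgroup R) [GradedRing 𝒜] (P : TwoSidedIdeal R) : Prop :=
  P ≠ ⊤ ∧ IsGradedIdeal 𝒜 P ∧
    ∀ x y z : R, IsHomog 𝒜 x → IsHomog 𝒜 y → IsHomog 𝒜 z →
      (∃ r s : R, x * r * y * s * z ≠ 0) → (∀ r s : R, x * r * y * s * z ∈ P) →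
      x * y ∈ P ∨ y * z ∈ P ∨ x * z ∈ P

/-! A graded weakly prime ideal `Q` with `0 ≠ x R y R z ⊆ Q` (`x, y, z` homogeneous) applied to the
factorisations `(R x R) (R y R z R)` and `(R x R y R) (R z R)` contains `x` or `y z`, and `x y`
or `z`; these ideals are graded, being generated by homogeneous elements, and the nonzero product
needed can be chosen with homogeneous middle factors by decomposing them. Hence each of `P` and `K`
contains two of `x y`, `y z`, `x z`, and any two such pairs share an element. -/

open DirectSum
open TwoSidedIdeal (span span_induction subset_span span_le mem_inf)

theorem TwoSidedIdeal.mul_mem_of_mem_span {Q : TwoSidedIdeal R} {S T : Set R}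
    (h : ∀ s ∈ S, ∀ u, ∀ t ∈ T, s * u * t ∈ Q) {a b : R} (ha : a ∈ span S) (hb : b ∈ span T) :
    a * b ∈ Q := by
  induction ha using span_induction generalizing b with
  | mem s hs =>
    suffices ∀ u, s * u * b ∈ Q by simpa using this 1
    induction hb using span_induction with
    | mem t ht => exact fun u => h s hs u t ht
    | zero => simp
    | add b b' _ _ hb hb' => exact fun u => by simpa [mul_add] using Q.add_mem (hb u) (hb' u)
    | neg b _ hb => exact fun u => by simpa using Q.neg_mem (hb u)
    | left_absorb c b _ hb => exact fun u => by simpa [mul_assoc] using hb (u * c)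
    | right_absorb c b _ hb => exact fun u => by simpa [mul_assoc] using Q.mul_mem_right _ c (hb u)
  | zero => simp
  | add a a' _ _ ha ha' => simpa [add_mul] using Q.add_mem (ha hb) (ha' hb)
  | neg a _ ha => simpa using Q.neg_mem (ha hb)
  | left_absorb c a _ ha => simpa [mul_assoc] using Q.mul_mem_left c _ (ha hb)
  | right_absorb c a _ ha => simpa [mul_assoc] using ha (TwoSidedIdeal.mul_mem_left _ c _ hb)

section Graded

variable {𝒜 : G → AddSubgroup R} [GradedRing 𝒜]

theorem IsHomog.mul {x y : R} (hx : IsHomog 𝒜 x) (hy : IsHomog 𝒜 y) : IsHomog 𝒜 (x * y) :=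
  let ⟨_, hx⟩ := hx
  let ⟨_, hy⟩ := hy
  ⟨_, SetLike.mul_mem_graded hx hy⟩

theorem IsGradedIdeal.inf {I J : TwoSidedIdeal R} (hI : IsGradedIdeal 𝒜 I)
    (hJ : IsGradedIdeal 𝒜 J) : IsGradedIdeal 𝒜 (I ⊓ J) := fun a ha g =>
  (mem_inf R).2 ⟨hI a ((mem_inf R).1 ha).1 g, hJ a ((mem_inf R).1 ha).2 g⟩

theorem coe_decompose_mul_left_mem {I : TwoSidedIdeal R} {x : R}
    (hx : ∀ g, (decompose 𝒜 x g : R) ∈ I) (a : R) (g : G) :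
    (decompose 𝒜 (a * x) g : R) ∈ I := by
  induction a using DirectSum.Decomposition.inductionOn 𝒜 with
  | zero => simp
  | add a a' ha ha' => simpa [add_mul] using I.add_mem ha ha'
  | @homogeneous i a =>
    rw [← add_neg_cancel_left i g, coe_decompose_mul_add_of_left_mem 𝒜 a.2]
    exact I.mul_mem_left _ _ (hx _)

theorem coe_decompose_mul_right_mem {I : TwoSidedIdeal R} {x : R}
    (hx : ∀ g, (decompose 𝒜 x g : R) ∈ I) (a : R) (g : G) :
    (decompose 𝒜 (x * a) g : R) ∈ I := by
  induction a using DirectSum.Decomposition.inductionOn 𝒜 with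
  | zero => simp
  | add a a' ha ha' => simpa [mul_add] using I.add_mem ha ha'
  | @homogeneous i a =>
    rw [← sub_add_cancel g i, coe_decompose_mul_add_of_right_mem 𝒜 a.2]
    exact I.mul_mem_right _ _ (hx _)

theorem isGradedIdeal_span {S : Set R} (hS : ∀ s ∈ S, IsHomog 𝒜 s) :
    IsGradedIdeal 𝒜 (span S) := by
  intro a ha
  induction ha using span_induction with
  | mem s hs =>
    obtain ⟨i, hi⟩ := hS s hs
    intro g
    by_cases hig : i = g
    · rw [← hig, decompose_of_mem_same 𝒜 hi]
      exact subset_span hs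
    · rw [decompose_of_mem_ne 𝒜 hi hig]
      exact zero_mem _
  | zero => simp
  | add a b _ _ ha hb =>
    intro g
    rw [decompose_add]
    exact add_mem (ha g) (hb g)
  | neg a _ ha =>
    intro g
    rw [decompose_neg]
    exact neg_mem (ha g)
  | left_absorb a x _ hx => exact coe_decompose_mul_left_mem hx a
  | right_absorb a x _ hx => exact coe_decompose_mul_right_mem hx a

theorem exists_isHomog_map_ne_zero {M : Type*} [AddCommMonoid M] (f : R →+ M) {a : R}
    (ha : f a ≠ 0) : ∃ b, IsHomog 𝒜 b ∧ f b ≠ 0 := by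
  by_contra! h
  exact ha <| DirectSum.Decomposition.inductionOn 𝒜 (map_zero f) (fun b => h b ⟨_, b.2⟩)
    (fun b b' hb hb' => by rw [map_add, hb, hb', add_zero]) a

theorem exists_isHomog_mul_mul_ne_zero {x y z r s : R} (h : x * r * y * s * z ≠ 0) :
    ∃ r s, IsHomog 𝒜 r ∧ IsHomog 𝒜 s ∧ x * r * y * s * z ≠ 0 := by
  obtain ⟨r', hr', h⟩ := exists_isHomog_map_ne_zero (𝒜 := 𝒜)
    ((AddMonoidHom.mulRight (y * s * z)).comp (AddMonoidHom.mulLeft x)) (a := r)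
    (by simpa [mul_assoc] using h)
  obtain ⟨s', hs', h⟩ := exists_isHomog_map_ne_zero (𝒜 := 𝒜)
    ((AddMonoidHom.mulRight z).comp (AddMonoidHom.mulLeft (x * r' * y))) (a := s)
    (by simpa [mul_assoc] using h)
  exact ⟨r', s', hr', hs', by simpa [mul_assoc] using h⟩

theorem IsGradedWeaklyPrime.subset_or_subset {Q : TwoSidedIdeal R}
    (hQ : IsGradedWeaklyPrime 𝒜 Q) {S T : Set R} (hS : ∀ s ∈ S, IsHomog 𝒜 s)
    (hT : ∀ t ∈ T, IsHomog 𝒜 t) (hne : ∃ s ∈ S, ∃ u, ∃ t ∈ T, s * u * t ≠ 0)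
    (hmem : ∀ s ∈ S, ∀ u, ∀ t ∈ T, s * u * t ∈ Q) : S ⊆ Q ∨ T ⊆ Q := by
  obtain ⟨s, hs, u, t, ht, hsut⟩ := hne
  simpa only [span_le] using hQ.2.2 (span S) (span T) (isGradedIdeal_span hS)
    (isGradedIdeal_span hT)
    ⟨s * u, TwoSidedIdeal.mul_mem_right _ _ _ (subset_span hs), t, subset_span ht, hsut⟩
    (fun _ ha _ hb => TwoSidedIdeal.mul_mem_of_mem_span hmem ha hb)

theorem IsGradedWeaklyPrime.mem_or_mul_mem {Q : TwoSidedIdeal R} (hQ : IsGradedWeaklyPrime 𝒜 Q)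
    {x y z r s : R} (hx : IsHomog 𝒜 x) (hy : IsHomog 𝒜 y) (hz : IsHomog 𝒜 z) (hs : IsHomog 𝒜 s)
    (hne : x * r * y * s * z ≠ 0) (hmem : ∀ r s, x * r * y * s * z ∈ Q) :
    x ∈ Q ∨ y * z ∈ Q := by
  have := hQ.subset_or_subset (S := {x}) (T := {w | ∃ s, IsHomog 𝒜 s ∧ w = y * s * z})
    (by simpa using hx) (by rintro _ ⟨s, hs, rfl⟩; exact (hy.mul hs).mul hz)
    ⟨x, rfl, r, _, ⟨s, hs, rfl⟩, by simpa [mul_assoc] using hne⟩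
    (by rintro _ rfl u _ ⟨s, -, rfl⟩; simpa [mul_assoc] using hmem u s)
  refine this.imp (fun h => h rfl) (fun h => ?_)
  simpa using h ⟨1, ⟨0, SetLike.one_mem_graded 𝒜⟩, by simp⟩

theorem IsGradedWeaklyPrime.mul_mem_or_mem {Q : TwoSidedIdeal R} (hQ : IsGradedWeaklyPrime 𝒜 Q)
    {x y z r s : R} (hx : IsHomog 𝒜 x) (hy : IsHomog 𝒜 y) (hz : IsHomog 𝒜 z) (hr : IsHomog 𝒜 r)
    (hne : x * r * y * s * z ≠ 0) (hmem : ∀ r s, x * r * y * s * z ∈ Q) :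
    x * y ∈ Q ∨ z ∈ Q := by
  have := hQ.subset_or_subset (S := {w | ∃ r, IsHomog 𝒜 r ∧ w = x * r * y}) (T := {z})
    (by rintro _ ⟨r, hr, rfl⟩; exact (hx.mul hr).mul hy) (by simpa using hz)
    ⟨_, ⟨r, hr, rfl⟩, s, z, rfl, hne⟩
    (by rintro _ ⟨r, -, rfl⟩ u _ rfl; exact hmem r u)
  refine this.imp (fun h => ?_) (fun h => h rfl)
  simpa using h ⟨1, ⟨0, SetLike.one_mem_graded 𝒜⟩, by simp⟩

end Graded

theorem TwoSidedIdeal.two_of_three {Q : TwoSidedIdeal R} {x y z : R}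
    (h₁ : x ∈ Q ∨ y * z ∈ Q) (h₂ : x * y ∈ Q ∨ z ∈ Q) :
    (x * y ∈ Q ∧ x * z ∈ Q) ∨ (x * y ∈ Q ∧ y * z ∈ Q) ∨ (y * z ∈ Q ∧ x * z ∈ Q) := by
  obtain h₁ | h₁ := h₁
  · exact .inl ⟨Q.mul_mem_right _ _ h₁, Q.mul_mem_right _ _ h₁⟩
  obtain h₂ | h₂ := h₂
  · exact .inr (.inl ⟨h₂, h₁⟩)
  · exact .inr (.inr ⟨h₁, Q.mul_mem_left _ _ h₂⟩)

theorem stmt3_general (𝒜 : G → AddSubgroup R) [GradedRing 𝒜] (P K : TwoSidedIdeal R)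
    (hP : IsGradedWeaklyPrime 𝒜 P) (hK : IsGradedWeaklyPrime 𝒜 K) :
    IsGradedWeakly2Absorbing 𝒜 (P ⊓ K) := by
  refine ⟨ne_top_of_le_ne_top hP.1 inf_le_left, hP.2.1.inf hK.2.1, ?_⟩
  rintro x y z hx hy hz ⟨r, s, hne⟩ hmem
  obtain ⟨r, s, hr, hs, hne⟩ := exists_isHomog_mul_mul_ne_zero (𝒜 := 𝒜) hne
  have hmemP r s : x * r * y * s * z ∈ P := ((mem_inf R).1 (hmem r s)).1
  have hmemK r s : x * r * y * s * z ∈ K := ((mem_inf R).1 (hmem r s)).2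
  have hP₂ := TwoSidedIdeal.two_of_three (hP.mem_or_mul_mem hx hy hz hs hne hmemP)
    (hP.mul_mem_or_mem hx hy hz hr hne hmemP)
  have hK₂ := TwoSidedIdeal.two_of_three (hK.mem_or_mul_mem hx hy hz hs hne hmemK)
    (hK.mul_mem_or_mem hx hy hz hr hne hmemK)
  simp only [mem_inf]
  tauto

/-- The intersection of two distinct graded weakly prime ideals is graded weakly 2-absorbing. -/
theorem stmt3 (𝒜 : G → AddSubgroup R) [GradedRing 𝒜] (P K : TwoSidedIdeal R)
    (hPK : P ≠ K) (hP : IsGradedWeaklyPrime 𝒜 P) (hK : IsGradedWeaklyPrime 𝒜 K) :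
    IsGradedWeakly2Absorbing 𝒜 (P ⊓ K) :=
  stmt3_general 𝒜 P K hP hK
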